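/- Let n ≥ 1 and L = w_1⋯w_{2n} ∈ 𝓛_n. Then the number of P3-matches in L equals crossʰ(L), the number of indices i with 1 ≤ i ≤ n−1 such that w_1⋯w_{2i} contains exactly i E's and i N's, w_{2i} = E, and w_{2i+1} = E (horizontal crossings of the diagonal y = x). By symmetry, the number of P4-matches in L equals crossᵛ(L), the number of indices i with 1 ≤ i ≤ n−1 such that w_1⋯w_{2i} contains exactly i E's and i N's, w_{2i} = N, and w_{2i+1} = N (vertical crossings of the diagonal). -/

import Mathlib

/-!
Words over the alphabet {E, N} are encoded as `List Bool`,
with `true` representing an east step `E` and `false` a north step `N`.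
The word `w = w_1 ⋯ w_{2n}` corresponds to the lattice path from `(0,0)` to
`(n,n)` whose `j`-th step is east if `w_j = true` and north if `w_j = false`.
-/

/-- `w ∈ 𝓛_n`: the word `w` has exactly `n` `E`'s and `n` `N`'s. -/
def memL (n : ℕ) (w : List Bool) : Prop :=
  w.count true = n ∧ w.count false = n

/-- The (0-indexed, increasing) list of positions at which the letter `b` occurs in `w`. -/
def occPos (w : List Bool) (b : Bool) : List ℕ :=
  (List.range w.length).filter (fun j => w.getD j (!b) == b)

/-- `ps_w({i, i+1})` (with `i` 1-indexed): the length-4 word obtained from `w` by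
deleting, for each `j ∉ {i, i+1}`, the `j`-th occurrence of `E` and the `j`-th
occurrence of `N` (counted from left to right); i.e. the word formed by the
`i`-th and `(i+1)`-th occurrences of `E` and of `N`, read in their original order. -/
def pairedSubword (w : List Bool) (i : ℕ) : List Bool :=
  let keep : List ℕ := [(occPos w true).getD (i-1) 0, (occPos w true).getD i 0,
                        (occPos w false).getD (i-1) 0, (occPos w false).getD i 0]
  ((List.range w.length).filter (fun j => keep.contains j)).map (fun j => w.getD j true)

/-- `P`-mch(w): the number of paired steps `i` with `1 ≤ i ≤ n-1` at which the
paired pattern `P` matches in `w ∈ 𝓛_n`. -/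
def pmch (n : ℕ) (P w : List Bool) : ℕ :=
  ((Finset.Icc 1 (n-1)).filter (fun i => pairedSubword w i = P)).card

def P1 : List Bool := [true, true, false, false]   -- EENN
def P2 : List Bool := [true, false, true, false]   -- ENEN
def P3 : List Bool := [false, true, true, false]   -- NEEN
def P4 : List Bool := [true, false, false, true]   -- ENNE
def P5 : List Bool := [false, true, false, true]   -- NENE
def P6 : List Bool := [false, false, true, true]   -- NNEE

/-- The path of `w` passes through the interior diagonal point `[i,i]`:
the prefix `w_1 ⋯ w_{2i}` contains exactly `i` `E`'s and `i` `N`'s. -/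
abbrev onDiag (w : List Bool) (i : ℕ) : Prop :=
  (w.take (2*i)).count true = i ∧ (w.take (2*i)).count false = i

/-- `crossʰ(w)`: the number of horizontal crossings of the diagonal, i.e. interior
diagonal points preceded by an east step and followed by an east step. -/
def crossH (n : ℕ) (w : List Bool) : ℕ :=
  ((Finset.Icc 1 (n-1)).filter (fun i =>
    onDiag w i ∧ w.getD (2*i-1) false = true ∧ w.getD (2*i) false = true)).card

/-- `crossᵛ(w)`: the number of vertical crossings of the diagonal, i.e. interior
diagonal points preceded by a north step and followed by a north step. -/
def crossV (n : ℕ) (w : List Bool) : ℕ :=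
  ((Finset.Icc 1 (n-1)).filter (fun i =>
    onDiag w i ∧ w.getD (2*i-1) true = false ∧ w.getD (2*i) true = false)).card


/-!
Let `e₁ < e₂` be the positions of the `i`-th and `(i+1)`-st `E` of `w`, and `f₁ < f₂` those of
the `i`-th and `(i+1)`-st `N`. The paired subword at `i` reads `NEEN` exactly when `f₁ < e₁` and
`e₂ < f₂`. Exactly `i - 1` letters `E` precede `e₁` and `i` precede `e₂`; the two inequalities say
that exactly `i` letters `N` precede each of them, so they hold iff `e₁ = 2i - 1` and `e₂ = 2i`
(0-indexed), that is, iff the path enters the diagonal point `(i, i)` by an east step and leaves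
it by an east step. Exchanging the roles of `E` and `N` gives the statement for `ENNE`.
-/

section ListLemmas

variable {α : Type*}

lemma length_lt_of_getElem?_eq_some {l : List α} {p : ℕ} {c : α} (h : l[p]? = some c) :
    p < l.length :=
  (List.getElem?_eq_some_iff.1 h).1

lemma getD_eq_iff_getElem?_eq_some {l : List α} {p : ℕ} (hp : p < l.length) (d c : α) :
    l.getD p d = c ↔ l[p]? = some c := by
  simp [List.getElem?_eq_getElem hp]

variable [BEq α]

lemma count_take_le_count_take (l : List α) (b : α) {p q : ℕ} (h : p ≤ q) :
    (l.take p).count b ≤ (l.take q).count b :=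
  (List.take_sublist_take_left h).count_le b

lemma count_take_add_one {l : List α} {p : ℕ} {c : α} (h : l[p]? = some c) (b : α) :
    (l.take (p + 1)).count b = (l.take p).count b + if c == b then 1 else 0 := by
  rw [List.take_add_one, h]
  simp [List.count_singleton]

end ListLemmas

lemma filter_range_contains_eq {m a b c d : ℕ} {keep : List ℕ}
    (hkeep : ∀ j, j ∈ keep ↔ j = a ∨ j = b ∨ j = c ∨ j = d)
    (hab : a < b) (hbc : b < c) (hcd : c < d) (hd : d < m) :
    (List.range m).filter (keep.contains ·) = [a, b, c, d] := by
  refine ((List.sortedLT_range m).pairwise.filter _).eq_of_mem_iff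
    (by simp; omega) fun j => ?_
  simp only [List.mem_filter, List.mem_range, List.contains_iff_mem, hkeep, List.mem_cons,
    List.not_mem_nil, or_false]
  omega

lemma map_filter_range_contains_eq_iff {m e₁ e₂ f₁ f₂ : ℕ} {keep : List ℕ} {g : ℕ → Bool}
    {b : Bool} (hkeep : ∀ j, j ∈ keep ↔ j = e₁ ∨ j = e₂ ∨ j = f₁ ∨ j = f₂)
    (he : e₁ < e₂) (hf : f₁ < f₂) (he₂ : e₂ < m) (hf₂ : f₂ < m)
    (hge₁ : g e₁ = b) (hge₂ : g e₂ = b) (hgf₁ : g f₁ = !b) (hgf₂ : g f₂ = !b) :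
    ((List.range m).filter (keep.contains ·)).map g = [!b, b, b, !b] ↔ f₁ < e₁ ∧ e₂ < f₂ := by
  have hne {x y : ℕ} (hx : g x = b) (hy : g y = !b) : x ≠ y := by
    rintro rfl; cases b <;> simp_all
  have read {x₁ x₂ x₃ x₄ : ℕ} (h₁₂ : x₁ < x₂) (h₂₃ : x₂ < x₃) (h₃₄ : x₃ < x₄) (h₄ : x₄ < m)
      (hx : ∀ j, j = e₁ ∨ j = e₂ ∨ j = f₁ ∨ j = f₂ ↔ j = x₁ ∨ j = x₂ ∨ j = x₃ ∨ j = x₄) :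
      ((List.range m).filter (keep.contains ·)).map g = [g x₁, g x₂, g x₃, g x₄] := by
    rw [filter_range_contains_eq (fun j => (hkeep j).trans (hx j)) h₁₂ h₂₃ h₃₄ h₄]; rfl
  -- case split over the six interleavings of `e₁ < e₂` with `f₁ < f₂`
  rcases (hne hge₁ hgf₁).lt_or_gt with h₁ | h₁ <;> rcases (hne hge₂ hgf₂).lt_or_gt with h₂ | h₂
  · rcases (hne hge₂ hgf₁).lt_or_gt with h₃ | h₃
    · rw [read he h₃ hf hf₂ (by omega)]
      exact iff_of_false (by simp [*]) (by omega)
    · rw [read h₁ h₃ h₂ hf₂ (by omega)]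
      exact iff_of_false (by simp [*]) (by omega)
  · rw [read h₁ hf h₂ he₂ (by omega)]
    exact iff_of_false (by simp [*]) (by omega)
  · rw [read h₁ he h₂ hf₂ (by omega)]
    exact iff_of_true (by simp [*]) ⟨h₁, h₂⟩
  · rcases (hne hge₁ hgf₂).lt_or_gt with h₃ | h₃
    · rw [read h₁ h₃ h₂ he₂ (by omega)]
      exact iff_of_false (by simp [*]) (by omega)
    · rw [read hf h₃ he he₂ (by omega)]
      exact iff_of_false (by simp [*]) (by omega)

lemma occPos_cons (a : Bool) (w : List Bool) (b : Bool) :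
    occPos (a :: w) b = (if a = b then [0] else []) ++ (occPos w b).map (· + 1) := by
  unfold occPos
  rw [List.length_cons, List.range_succ_eq_map, List.filter_cons, List.filter_map]
  by_cases h : a = b <;> simp [h, Function.comp_def]

lemma length_occPos (w : List Bool) (b : Bool) : (occPos w b).length = w.count b := by
  induction w with
  | nil => rfl
  | cons a w ih => by_cases h : a = b <;> simp [occPos_cons, ih, h]

/-- The position (0-indexed) of the `(k+1)`-st occurrence of `b` in `w`; junk `0` if there is
none. -/
def nthOcc (w : List Bool) (b : Bool) (k : ℕ) : ℕ := (occPos w b).getD k 0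

lemma nthOcc_spec {w : List Bool} {b : Bool} {k : ℕ} (hk : k < w.count b) :
    w[nthOcc w b k]? = some b ∧ (w.take (nthOcc w b k)).count b = k := by
  induction w generalizing k with
  | nil => simp at hk
  | cons a w ih =>
    have hmap {j : ℕ} (hj : j < w.count b) :
        ((occPos w b).map (· + 1)).getD j 0 = nthOcc w b j + 1 := by
      have hj' : j < (occPos w b).length := by rwa [length_occPos]
      rw [List.getD_eq_getElem _ _ (by simpa using hj'), List.getElem_map, nthOcc,
        List.getD_eq_getElem _ _ hj']
    by_cases hab : a = b
    · subst hab
      cases k with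
      | zero => simp [nthOcc, occPos_cons]
      | succ k =>
        have hk : k < w.count a := by simpa using hk
        have hcons : nthOcc (a :: w) a (k + 1) = nthOcc w a k + 1 := by
          rw [nthOcc, occPos_cons, if_pos rfl, List.singleton_append, List.getD_cons_succ, hmap hk]
        simp [hcons, ih hk]
    · have hk : k < w.count b := by simpa [List.count_cons, hab] using hk
      have hcons : nthOcc (a :: w) b k = nthOcc w b k + 1 := by
        rw [nthOcc, occPos_cons, if_neg hab, List.nil_append, hmap hk]
      simp [hcons, ih hk, hab]

lemma nthOcc_lt_iff {w : List Bool} {b : Bool} {k : ℕ} (hk : k < w.count b) {p : ℕ} :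
    nthOcc w b k < p ↔ k < (w.take p).count b := by
  obtain ⟨hget, hcount⟩ := nthOcc_spec hk
  constructor
  · intro h
    calc k < (w.take (nthOcc w b k + 1)).count b := by simp [count_take_add_one hget, hcount]
      _ ≤ (w.take p).count b := count_take_le_count_take w b h
  · intro h
    by_contra! hle
    exact h.not_ge (hcount ▸ count_take_le_count_take w b hle)

lemma nthOcc_eq_iff {w : List Bool} {b : Bool} {k : ℕ} (hk : k < w.count b) {p : ℕ} :
    nthOcc w b k = p ↔ w[p]? = some b ∧ (w.take p).count b = k := by
  refine ⟨fun h => h ▸ nthOcc_spec hk, fun ⟨hget, hcount⟩ => ?_⟩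
  have hlt : nthOcc w b k < p + 1 := by simp [nthOcc_lt_iff hk, count_take_add_one hget, hcount]
  have hge : ¬ nthOcc w b k < p := by simp [nthOcc_lt_iff hk, hcount]
  omega

section Diagonal

variable {w : List Bool} {b : Bool} {i : ℕ}

lemma nthOcc_nested_iff (hi : 0 < i) (hb : i < w.count b) (hnb : i < w.count (!b)) :
    nthOcc w (!b) (i - 1) < nthOcc w b (i - 1) ∧ nthOcc w b i < nthOcc w (!b) i ↔
      nthOcc w b (i - 1) = 2 * i - 1 ∧ nthOcc w b i = 2 * i := by
  obtain ⟨he₁, hce₁⟩ := nthOcc_spec (show i - 1 < w.count b by omega)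
  obtain ⟨he₂, hce₂⟩ := nthOcc_spec hb
  set e₁ := nthOcc w b (i - 1)
  set e₂ := nthOcc w b i
  have he : e₁ < e₂ := (nthOcc_lt_iff (by omega)).2 (by omega)
  have hf₂ : e₂ < nthOcc w (!b) i ↔ (w.take e₂).count (!b) ≤ i := by
    rw [← not_le, ← Nat.lt_succ_iff, nthOcc_lt_iff hnb, count_take_add_one he₂]
    simp
  rw [nthOcc_lt_iff (by omega), hf₂]
  have hmono := count_take_le_count_take w (!b) he.le
  have hlen₁ := List.count_add_count_not (w.take e₁) b
  have hlen₂ := List.count_add_count_not (w.take e₂) b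
  rw [List.length_take_of_le (length_lt_of_getElem?_eq_some he₁).le] at hlen₁
  rw [List.length_take_of_le (length_lt_of_getElem?_eq_some he₂).le] at hlen₂
  omega

lemma onDiag_iff_count_take (h : 2 * i ≤ w.length) (b : Bool) :
    onDiag w i ↔ (w.take (2 * i)).count b = i := by
  have hlen := List.count_add_count_not (w.take (2 * i)) b
  rw [List.length_take_of_le h] at hlen
  cases b <;> simp only [onDiag, Bool.not_true, Bool.not_false] at hlen ⊢ <;> omega

lemma onDiag_and_getD_iff_nthOcc_eq (hi : 0 < i) (hb : i < w.count b)
    (hnb : i < w.count (!b)) :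
    onDiag w i ∧ w.getD (2 * i - 1) (!b) = b ∧ w.getD (2 * i) (!b) = b ↔
      nthOcc w b (i - 1) = 2 * i - 1 ∧ nthOcc w b i = 2 * i := by
  have hlen : 2 * i < w.length := by have := List.count_add_count_not w b; omega
  rw [onDiag_iff_count_take hlen.le b, getD_eq_iff_getElem?_eq_some (by omega),
    getD_eq_iff_getElem?_eq_some hlen, nthOcc_eq_iff (by omega), nthOcc_eq_iff hb]
  have hstep (h : w[2 * i - 1]? = some b) :
      (w.take (2 * i)).count b = (w.take (2 * i - 1)).count b + 1 := by
    have := count_take_add_one h b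
    rwa [beq_self_eq_true, if_pos rfl, Nat.sub_add_cancel (by omega)] at this
  constructor
  · rintro ⟨hcount, hget₁, hget₂⟩
    exact ⟨⟨hget₁, by have := hstep hget₁; omega⟩, hget₂, hcount⟩
  · rintro ⟨⟨hget₁, -⟩, hget₂, hcount⟩
    exact ⟨hcount, hget₁, hget₂⟩

end Diagonal

section PairedSubword

variable {w : List Bool} {b : Bool} {i : ℕ}

lemma pairedSubword_eq_iff_nthOcc_nested (hi : 0 < i) (hb : i < w.count b)
    (hnb : i < w.count (!b)) :
    pairedSubword w i = [!b, b, b, !b] ↔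
      nthOcc w (!b) (i - 1) < nthOcc w b (i - 1) ∧ nthOcc w b i < nthOcc w (!b) i := by
  obtain ⟨he₁, -⟩ := nthOcc_spec (show i - 1 < w.count b by omega)
  obtain ⟨he₂, hce₂⟩ := nthOcc_spec hb
  obtain ⟨hf₁, -⟩ := nthOcc_spec (show i - 1 < w.count (!b) by omega)
  obtain ⟨hf₂, hcf₂⟩ := nthOcc_spec hnb
  have hletter {p : ℕ} {c : Bool} (h : w[p]? = some c) : w.getD p true = c :=
    (getD_eq_iff_getElem?_eq_some (length_lt_of_getElem?_eq_some h) _ _).2 h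
  refine map_filter_range_contains_eq_iff (fun j => ?_)
    ((nthOcc_lt_iff (by omega)).2 (by omega)) ((nthOcc_lt_iff (by omega)).2 (by omega))
    (length_lt_of_getElem?_eq_some he₂) (length_lt_of_getElem?_eq_some hf₂)
    (hletter he₁) (hletter he₂) (hletter hf₁) (hletter hf₂)
  cases b
  · simp only [nthOcc, Bool.not_false, List.mem_cons, List.not_mem_nil, or_false]
    tauto
  · simp only [nthOcc, Bool.not_true, List.mem_cons, List.not_mem_nil, or_false]

lemma pairedSubword_eq_iff_onDiag_and_getD (hi : 0 < i) (hb : i < w.count b)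
    (hnb : i < w.count (!b)) :
    pairedSubword w i = [!b, b, b, !b] ↔
      onDiag w i ∧ w.getD (2 * i - 1) (!b) = b ∧ w.getD (2 * i) (!b) = b := by
  rw [pairedSubword_eq_iff_nthOcc_nested hi hb hnb, nthOcc_nested_iff hi hb hnb,
    onDiag_and_getD_iff_nthOcc_eq hi hb hnb]

end PairedSubword

theorem P3_matches_eq_horizontal_crossings_general
    (n : ℕ) (w : List Bool) (hw : memL n w) :
    pmch n P3 w = crossH n w ∧ pmch n P4 w = crossV n w := by
  have hmatch (b : Bool) : ∀ i ∈ Finset.Icc 1 (n - 1), pairedSubword w i = [!b, b, b, !b] ↔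
      onDiag w i ∧ w.getD (2 * i - 1) (!b) = b ∧ w.getD (2 * i) (!b) = b := by
    intro i hi
    have hcount : w.count b = n ∧ w.count (!b) = n := by cases b <;> simp [hw.1, hw.2]
    rw [Finset.mem_Icc] at hi
    exact pairedSubword_eq_iff_onDiag_and_getD (by omega) (by omega) (by omega)
  exact ⟨congrArg _ (Finset.filter_congr (hmatch true)),
    congrArg _ (Finset.filter_congr (hmatch false))⟩

theorem P3_matches_eq_horizontal_crossings
    (n : ℕ) (hn : 1 ≤ n) (w : List Bool) (hw : memL n w) :
    pmch n P3 w = crossH n w ∧ pmch n P4 w = crossV n w :=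
  P3_matches_eq_horizontal_crossings_general n w hw
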